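/- There exists ν₊ > 0 such that for every ν ∈ (0, ν₊] there exists λ > 0 with the following property: for all u₁, u₂ ∈ C_ν⁰ := [−√ν/2, √ν/2] × [−ν^{3/2}, ν^{3/2}] × [−ν^{3/2}, ν^{3/2}], one has 2·(G_ν(u₁) − G_ν(u₂))ᵀ Q₁ (u₁ − u₂) ≥ λ·‖u₁ − u₂‖², where Q₁ := diag(1, 1, −1). (This is the strong cone condition on C_ν⁰ with respect to Q₁, establishing hyperbolicity of the origin after the bifurcation with a two-dimensional unstable direction.) -/
import Mathlib


open Set

/-- The vector field in `ℝ³`: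
`G_ν(x,y,z) = (x(ν − x²) + x³(y+z) + x(y²+z²) + yz, y + x²(y+z) + x⁴ + yz, −z + x²(y+z) + x⁴ + yz)`. -/
noncomputable def G (ν : ℝ) (p : ℝ × ℝ × ℝ) : ℝ × ℝ × ℝ :=
  (p.1 * (ν - p.1 ^ 2) + p.1 ^ 3 * (p.2.1 + p.2.2) + p.1 * (p.2.1 ^ 2 + p.2.2 ^ 2)
      + p.2.1 * p.2.2,
   p.2.1 + p.1 ^ 2 * (p.2.1 + p.2.2) + p.1 ^ 4 + p.2.1 * p.2.2,
   -p.2.2 + p.1 ^ 2 * (p.2.1 + p.2.2) + p.1 ^ 4 + p.2.1 * p.2.2)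

/-- The box `S_θ = [−√(2θ), √(2θ)] × [−θ^{3/2}, θ^{3/2}] × [−θ^{3/2}, θ^{3/2}]`. -/
noncomputable def S (θ : ℝ) : Set (ℝ × ℝ × ℝ) :=
  Icc (-Real.sqrt (2 * θ)) (Real.sqrt (2 * θ)) ×ˢ
    (Icc (-θ ^ ((3 : ℝ) / 2)) (θ ^ ((3 : ℝ) / 2)) ×ˢ
      Icc (-θ ^ ((3 : ℝ) / 2)) (θ ^ ((3 : ℝ) / 2)))

/-- The box `C_ν⁰ = [−√ν/2, √ν/2] × [−ν^{3/2}, ν^{3/2}]²`. -/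
noncomputable def C0 (ν : ℝ) : Set (ℝ × ℝ × ℝ) :=
  Icc (-(Real.sqrt ν / 2)) (Real.sqrt ν / 2) ×ˢ
    (Icc (-ν ^ ((3 : ℝ) / 2)) (ν ^ ((3 : ℝ) / 2)) ×ˢ
      Icc (-ν ^ ((3 : ℝ) / 2)) (ν ^ ((3 : ℝ) / 2)))

lemma core (r a b c P Ma Mb Mc Na Nb Nc : ℝ) (hr0 : 0 < r) (hr : r ≤ 1/100)
    (hP0 : 0 ≤ P) (hP : P ≤ 3/4*r^2)
    (hMa1 : -(r^4) ≤ Ma) (hMa2 : Ma ≤ r^4)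
    (hMb1 : -(2*r^3) ≤ Mb) (hMb2 : Mb ≤ 2*r^3)
    (hMc1 : -(2*r^3) ≤ Mc) (hMc2 : Mc ≤ 2*r^3)
    (hNa1 : -(r^3) ≤ Na) (hNa2 : Na ≤ r^3)
    (hNb1 : -(r^2) ≤ Nb) (hNb2 : Nb ≤ r^2)
    (hNc1 : -(r^2) ≤ Nc) (hNc2 : Nc ≤ r^2) :
    2*r^2*a^2 - 2*P*a^2 + 2*b^2 + 2*c^2 + 2*Ma*a^2 + 2*Mb*a*b + 2*Mc*a*c
      + 2*Na*a*(b-c) + 2*Nb*b*(b-c) + 2*Nc*c*(b-c)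
      ≥ r^2/4*(a^2+b^2+c^2) := by
  have f1 : 0 ≤ (3/4*r^2 - P)*a^2 := mul_nonneg (by linarith) (sq_nonneg a)
  have f2 : 0 ≤ (r^4 + Ma)*a^2 := mul_nonneg (by linarith) (sq_nonneg a)
  have f3 : 0 ≤ (2*r^3 + Mb)*(a+b)^2 := mul_nonneg (by linarith) (sq_nonneg _)
  have f4 : 0 ≤ (2*r^3 - Mb)*(a-b)^2 := mul_nonneg (by linarith) (sq_nonneg _)
  have f5 : 0 ≤ (2*r^3 + Mc)*(a+c)^2 := mul_nonneg (by linarith) (sq_nonneg _)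
  have f6 : 0 ≤ (2*r^3 - Mc)*(a-c)^2 := mul_nonneg (by linarith) (sq_nonneg _)
  have f7 : 0 ≤ (r^3 + Na)*(a+(b-c))^2 := mul_nonneg (by linarith) (sq_nonneg _)
  have f8 : 0 ≤ (r^3 - Na)*(a-(b-c))^2 := mul_nonneg (by linarith) (sq_nonneg _)
  have f9 : 0 ≤ (r^2 + Nb)*(b+(b-c))^2 := mul_nonneg (by linarith) (sq_nonneg _)
  have f10 : 0 ≤ (r^2 - Nb)*(b-(b-c))^2 := mul_nonneg (by linarith) (sq_nonneg _)
  have f11 : 0 ≤ (r^2 + Nc)*(c+(b-c))^2 := mul_nonneg (by linarith) (sq_nonneg _)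
  have f12 : 0 ≤ (r^2 - Nc)*(c-(b-c))^2 := mul_nonneg (by linarith) (sq_nonneg _)
  have g1 : 0 ≤ (1/100 - r)*(r^2*a^2) := mul_nonneg (by linarith) (by positivity)
  have g2 : 0 ≤ (1/100 - r)*(r^3*a^2) := mul_nonneg (by linarith) (by positivity)
  have g3 : 0 ≤ (1/100 - r)*(r^2*b^2) := mul_nonneg (by linarith) (by positivity)
  have g4 : 0 ≤ (1/100 - r)*(r^2*c^2) := mul_nonneg (by linarith) (by positivity)
  have g5 : 0 ≤ (1/100 - r)*(r*b^2) := mul_nonneg (by linarith) (by positivity)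
  have g6 : 0 ≤ (1/100 - r)*(r*c^2) := mul_nonneg (by linarith) (by positivity)
  have g7 : 0 ≤ (1/100 - r)*(r*a^2) := mul_nonneg (by linarith) (by positivity)
  have g8 : 0 ≤ r^2*(b+c)^2 := by positivity
  have g9 : 0 ≤ r^3*(b+c)^2 := by positivity
  have g10 : 0 ≤ (1/100 - r)*a^2 := mul_nonneg (by linarith) (sq_nonneg a)
  have g11 : 0 ≤ (1/100 - r)*b^2 := mul_nonneg (by linarith) (sq_nonneg b)
  have g12 : 0 ≤ (1/100 - r)*c^2 := mul_nonneg (by linarith) (sq_nonneg c)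
  have p1 : 0 ≤ r^2*a^2 := by positivity
  have p2 : 0 ≤ r^3*a^2 := by positivity
  have p3 : 0 ≤ r^4*a^2 := by positivity
  have p4 : 0 ≤ b^2 := sq_nonneg b
  have p5 : 0 ≤ c^2 := sq_nonneg c
  have p6 : 0 ≤ a^2 := sq_nonneg a
  have p7 : 0 ≤ r*b^2 := by positivity
  have p8 : 0 ≤ r*c^2 := by positivity
  have p9 : 0 ≤ r^2*b^2 := by positivity
  have p10 : 0 ≤ r^2*c^2 := by positivity
  have p11 : 0 ≤ r^3*b^2 := by positivity
  have p12 : 0 ≤ r^3*c^2 := by positivity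
  linarith [f1,f2,f3,f4,f5,f6,f7,f8,f9,f10,f11,f12,g1,g2,g3,g4,g5,g6,g7,g8,g9,g10,g11,g12,p1,p2,p3,p4,p5,p6,p7,p8,p9,p10,p11,p12]

lemma prodb (s t S T : ℝ) (h1 : -S ≤ s) (h2 : s ≤ S) (h3 : -T ≤ t) (h4 : t ≤ T) :
    -(S*T) ≤ s*t ∧ s*t ≤ S*T := by
  constructor
  · nlinarith [mul_nonneg (by linarith : (0:ℝ) ≤ S - s) (by linarith : (0:ℝ) ≤ T - t),
      mul_nonneg (by linarith : (0:ℝ) ≤ S + s) (by linarith : (0:ℝ) ≤ T + t)]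
  · nlinarith [mul_nonneg (by linarith : (0:ℝ) ≤ S - s) (by linarith : (0:ℝ) ≤ T + t),
      mul_nonneg (by linarith : (0:ℝ) ≤ S + s) (by linarith : (0:ℝ) ≤ T - t)]

lemma pow_step (r : ℝ) (h0 : 0 < r) (h : r ≤ 1/100) (n : ℕ) : r^(n+1) ≤ r^n/100 := by
  have h2 := mul_le_mul_of_nonneg_left h (pow_nonneg h0.le n)
  rw [pow_succ]; linarith

set_option maxHeartbeats 1000000 in
lemma key (r x₁ y₁ z₁ x₂ y₂ z₂ : ℝ) (hr0 : 0 < r) (hr : r ≤ 1/100)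
    (hx₁l : -(r/2) ≤ x₁) (hx₁u : x₁ ≤ r/2)
    (hx₂l : -(r/2) ≤ x₂) (hx₂u : x₂ ≤ r/2)
    (hy₁l : -(r^3) ≤ y₁) (hy₁u : y₁ ≤ r^3)
    (hy₂l : -(r^3) ≤ y₂) (hy₂u : y₂ ≤ r^3)
    (hz₁l : -(r^3) ≤ z₁) (hz₁u : z₁ ≤ r^3)
    (hz₂l : -(r^3) ≤ z₂) (hz₂u : z₂ ≤ r^3) :
    2 * (((G (r^2) (x₁,(y₁,z₁))).1 - (G (r^2) (x₂,(y₂,z₂))).1) * (x₁ - x₂) +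
         ((G (r^2) (x₁,(y₁,z₁))).2.1 - (G (r^2) (x₂,(y₂,z₂))).2.1) * (y₁ - y₂) -
         ((G (r^2) (x₁,(y₁,z₁))).2.2 - (G (r^2) (x₂,(y₂,z₂))).2.2) * (z₁ - z₂))
      ≥ r^2/4 * ((x₁-x₂)^2 + (y₁-y₂)^2 + (z₁-z₂)^2) := by
  have hr3 : (0:ℝ) ≤ r^3 := by positivity
  have hr5 : r^5 ≤ r^4/100 := pow_step r hr0 hr 4
  have hr6 : r^6 ≤ r^5/100 := pow_step r hr0 hr 5
  have hr4 : r^4 ≤ r^3/100 := pow_step r hr0 hr 3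
  have hr3b : r^3 ≤ r^2/100 := pow_step r hr0 hr 2
  have px1 := prodb x₁ x₁ (r/2) (r/2) hx₁l hx₁u hx₁l hx₁u
  have px2 := prodb x₂ x₂ (r/2) (r/2) hx₂l hx₂u hx₂l hx₂u
  have px12 := prodb x₁ x₂ (r/2) (r/2) hx₁l hx₁u hx₂l hx₂u
  have py1 := prodb y₁ y₁ (r^3) (r^3) hy₁l hy₁u hy₁l hy₁u
  have pz1 := prodb z₁ z₁ (r^3) (r^3) hz₁l hz₁u hz₁l hz₁u
  have hrr : r/2*(r/2) = r^2/4 := by ring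
  have hrr3 : r^3*r^3 = r^6 := by ring
  have hP0 : 0 ≤ x₁^2 + x₁*x₂ + x₂^2 := by
    have := sq_nonneg (x₁+x₂); have := sq_nonneg x₁; have := sq_nonneg x₂; linarith
  have hP : x₁^2 + x₁*x₂ + x₂^2 ≤ 3/4*r^2 := by
    have h1 := px1.2; have h2 := px2.2; have h3 := px12.2
    linarith
  -- Ma bounds via prodb on P and (y1+z1)
  have pP := prodb (x₁^2 + x₁*x₂ + x₂^2) (y₁+z₁) (3/4*r^2) (2*r^3)
    (by linarith) hP (by linarith) (by linarith)
  have hMa2 : (x₁^2 + x₁*x₂ + x₂^2)*(y₁+z₁) + (y₁^2 + z₁^2) ≤ r^4 := by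
    have h1 := pP.2; have h2 := py1.2; have h3 := pz1.2; linarith
  have hMa1 : -(r^4) ≤ (x₁^2 + x₁*x₂ + x₂^2)*(y₁+z₁) + (y₁^2 + z₁^2) := by
    have h1 := pP.1; have h2 := py1.1; have h3 := pz1.1
    have h4 := sq_nonneg y₁; have h5 := sq_nonneg z₁; linarith
  -- cube: x2^3 = x2^2 * x2
  have pc := prodb (x₂*x₂) x₂ (r^2/4) (r/2) (by linarith [px2.1, px2.2]) (by linarith [px2.2]) hx₂l hx₂u
  have pb := prodb x₂ (y₁+y₂) (r/2) (2*r^3) hx₂l hx₂u (by linarith) (by linarith)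
  have pcz := prodb x₂ (z₁+z₂) (r/2) (2*r^3) hx₂l hx₂u (by linarith) (by linarith)
  have hMb2 : x₂^3 + x₂*(y₁+y₂) + z₁ ≤ 2*r^3 := by linarith [pc.2, pb.2]
  have hMb1 : -(2*r^3) ≤ x₂^3 + x₂*(y₁+y₂) + z₁ := by linarith [pc.1, pb.1]
  have hMc2 : x₂^3 + x₂*(z₁+z₂) + y₂ ≤ 2*r^3 := by linarith [pc.2, pcz.2]
  have hMc1 : -(2*r^3) ≤ x₂^3 + x₂*(z₁+z₂) + y₂ := by linarith [pc.1, pcz.1]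
  -- Na bounds
  have pa1 := prodb (x₁+x₂) (y₁+z₁) r (2*r^3) (by linarith) (by linarith) (by linarith) (by linarith)
  have pa2 := prodb (x₁+x₂) (x₁^2+x₂^2) r (r^2/2)
    (by linarith) (by linarith)
    (by linarith [px1.1, px2.1, sq_nonneg x₁, sq_nonneg x₂]) (by linarith [px1.2, px2.2])
  have hNa2 : (x₁+x₂)*(y₁+z₁) + (x₁+x₂)*(x₁^2+x₂^2) ≤ r^3 := by linarith [pa1.2, pa2.2]
  have hNa1 : -(r^3) ≤ (x₁+x₂)*(y₁+z₁) + (x₁+x₂)*(x₁^2+x₂^2) := by linarith [pa1.1, pa2.1]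
  -- Nb, Nc bounds
  have hNb2 : x₂^2 + z₁ ≤ r^2 := by linarith [px2.2, hr3b]
  have hNb1 : -(r^2) ≤ x₂^2 + z₁ := by linarith [sq_nonneg x₂, hr3b]
  have hNc2 : x₂^2 + y₂ ≤ r^2 := by linarith [px2.2, hr3b]
  have hNc1 : -(r^2) ≤ x₂^2 + y₂ := by linarith [sq_nonneg x₂, hr3b]
  have hcore := core r (x₁-x₂) (y₁-y₂) (z₁-z₂)
    (x₁^2 + x₁*x₂ + x₂^2)
    ((x₁^2 + x₁*x₂ + x₂^2)*(y₁+z₁) + (y₁^2 + z₁^2))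
    (x₂^3 + x₂*(y₁+y₂) + z₁)
    (x₂^3 + x₂*(z₁+z₂) + y₂)
    ((x₁+x₂)*(y₁+z₁) + (x₁+x₂)*(x₁^2+x₂^2))
    (x₂^2 + z₁) (x₂^2 + y₂)
    hr0 hr hP0 hP hMa1 hMa2 hMb1 hMb2 hMc1 hMc2 hNa1 hNa2 hNb1 hNb2 hNc1 hNc2
  have hE : 2 * (((G (r^2) (x₁,(y₁,z₁))).1 - (G (r^2) (x₂,(y₂,z₂))).1) * (x₁ - x₂) +
         ((G (r^2) (x₁,(y₁,z₁))).2.1 - (G (r^2) (x₂,(y₂,z₂))).2.1) * (y₁ - y₂) -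
         ((G (r^2) (x₁,(y₁,z₁))).2.2 - (G (r^2) (x₂,(y₂,z₂))).2.2) * (z₁ - z₂)) =
      2*r^2*(x₁-x₂)^2 - 2*(x₁^2 + x₁*x₂ + x₂^2)*(x₁-x₂)^2 + 2*(y₁-y₂)^2 + 2*(z₁-z₂)^2
        + 2*((x₁^2 + x₁*x₂ + x₂^2)*(y₁+z₁) + (y₁^2 + z₁^2))*(x₁-x₂)^2
        + 2*(x₂^3 + x₂*(y₁+y₂) + z₁)*(x₁-x₂)*(y₁-y₂)
        + 2*(x₂^3 + x₂*(z₁+z₂) + y₂)*(x₁-x₂)*(z₁-z₂)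
        + 2*((x₁+x₂)*(y₁+z₁) + (x₁+x₂)*(x₁^2+x₂^2))*(x₁-x₂)*((y₁-y₂)-(z₁-z₂))
        + 2*(x₂^2 + z₁)*(y₁-y₂)*((y₁-y₂)-(z₁-z₂))
        + 2*(x₂^2 + y₂)*(z₁-z₂)*((y₁-y₂)-(z₁-z₂)) := by
    simp only [G]
    ring
  rw [hE]
  exact hcore

/-- Strong cone condition on `C_ν⁰` with respect to `Q₁ = diag(1, 1, −1)`:
there exists `ν₊ > 0` such that for every `ν ∈ (0, ν₊]` there is `λ > 0` with
`2 (G_ν u₁ − G_ν u₂)ᵀ Q₁ (u₁ − u₂) ≥ λ ‖u₁ − u₂‖²` for all `u₁, u₂ ∈ C_ν⁰`. -/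
theorem stmt13 :
    ∃ νp : ℝ, 0 < νp ∧ ∀ ν ∈ Ioc (0 : ℝ) νp, ∃ lam : ℝ, 0 < lam ∧
      ∀ u₁ ∈ C0 ν, ∀ u₂ ∈ C0 ν,
        2 * (((G ν u₁).1 - (G ν u₂).1) * (u₁.1 - u₂.1) +
             ((G ν u₁).2.1 - (G ν u₂).2.1) * (u₁.2.1 - u₂.2.1) -
             ((G ν u₁).2.2 - (G ν u₂).2.2) * (u₁.2.2 - u₂.2.2)) ≥
          lam * ((u₁.1 - u₂.1) ^ 2 + (u₁.2.1 - u₂.2.1) ^ 2 + (u₁.2.2 - u₂.2.2) ^ 2) := by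
  refine ⟨1/10000, by norm_num, ?_⟩
  rintro ν ⟨hν0, hνle⟩
  refine ⟨ν/4, by positivity, ?_⟩
  rintro ⟨x₁, y₁, z₁⟩ hu₁ ⟨x₂, y₂, z₂⟩ hu₂
  set r := Real.sqrt ν with hrdef
  have hr0 : 0 < r := Real.sqrt_pos.2 hν0
  have hrsq : r^2 = ν := Real.sq_sqrt hν0.le
  have hr : r ≤ 1/100 := by
    have h1 : Real.sqrt (1/10000) = 1/100 := by
      rw [show (1/10000:ℝ) = (1/100)^2 by norm_num, Real.sqrt_sq (by norm_num)]
    rw [hrdef, ← h1]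
    exact Real.sqrt_le_sqrt hνle
  have h32 : ν ^ ((3:ℝ)/2) = r^3 := by
    rw [hrdef, Real.sqrt_eq_rpow, ← Real.rpow_natCast (ν ^ ((1:ℝ)/2)) 3,
      ← Real.rpow_mul hν0.le]
    norm_num
  simp only [C0, Set.mem_prod, Set.mem_Icc] at hu₁ hu₂
  obtain ⟨⟨hx₁l, hx₁u⟩, ⟨hy₁l, hy₁u⟩, ⟨hz₁l, hz₁u⟩⟩ := hu₁
  obtain ⟨⟨hx₂l, hx₂u⟩, ⟨hy₂l, hy₂u⟩, ⟨hz₂l, hz₂u⟩⟩ := hu₂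
  rw [h32] at hy₁l hy₁u hy₂l hy₂u hz₁l hz₁u hz₂l hz₂u
  have hkey := key r x₁ y₁ z₁ x₂ y₂ z₂ hr0 hr hx₁l hx₁u hx₂l hx₂u
    hy₁l hy₁u hy₂l hy₂u hz₁l hz₁u hz₂l hz₂u
  rw [hrsq] at hkey
  exact hkey
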